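/- arXiv:1510.08335 — 2 statements merged into one kernel-verified Lean document; each statement's English description precedes it below -/
import Mathlib

section
/- Let X be a real random variable on a finite probability space where every scenario has positive probability, and Δα⁺, Δα⁻ > 0. If x* minimizes f(x) = Δα⁺·E[(X-x)_+] + Δα⁻·E[(X-x)_-] + λ·x and λ = Δα⁺ (the distortion hits its upper bound), then x* ≤ X(ω) for all scenarios ω. -/
/-!
With `λ = Δα⁺` the objective is constant, equal to `Δα⁺ E[X]`, on `x ≤ min X`, while
`E[(X - x)_+] ≥ E[X] - x` gives `f(x) ≥ Δα⁺ E[X] + Δα⁻ E[(x - X)_+]` everywhere. Comparing the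
minimizer with `min X` therefore forces `E[(x* - X)_+] = 0`, and since every scenario has positive
probability, `x* ≤ X(ω)` for all `ω`.
-/

open Finset

section

variable {Ω : Type*} [Fintype Ω] {p X : Ω → ℝ} {x : ℝ}

theorem sum_mul_sub_le_sum_mul_max_sub (hp : ∀ ω, 0 ≤ p ω) (X : Ω → ℝ) (x : ℝ) :
    ∑ ω, p ω * X ω - x * ∑ ω, p ω ≤ ∑ ω, p ω * max (X ω - x) 0 := by
  rw [mul_sum, ← sum_sub_distrib]
  gcongr with ω
  have := mul_le_mul_of_nonneg_left (le_max_left (X ω - x) 0) (hp ω)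
  linarith

theorem sum_mul_max_sub_eq_of_le (h : ∀ ω, x ≤ X ω) :
    ∑ ω, p ω * max (X ω - x) 0 = ∑ ω, p ω * X ω - x * ∑ ω, p ω := by
  rw [mul_sum, ← sum_sub_distrib]
  refine sum_congr rfl fun ω _ => ?_
  rw [max_eq_left (sub_nonneg.mpr (h ω))]
  ring

theorem sum_mul_max_sub_eq_zero_of_le (h : ∀ ω, x ≤ X ω) :
    ∑ ω, p ω * max (x - X ω) 0 = 0 :=
  sum_eq_zero fun ω _ => by rw [max_eq_right (sub_nonpos.mpr (h ω)), mul_zero]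

theorem le_of_sum_mul_max_sub_nonpos (hp : ∀ ω, 0 < p ω)
    (h : ∑ ω, p ω * max (x - X ω) 0 ≤ 0) (ω : Ω) : x ≤ X ω := by
  have hnonneg : ∀ ω ∈ univ, 0 ≤ p ω * max (x - X ω) 0 :=
    fun ω _ => mul_nonneg (hp ω).le (le_max_right _ _)
  have hzero := (sum_eq_zero_iff_of_nonneg hnonneg).mp
    (le_antisymm h (sum_nonneg hnonneg)) ω (mem_univ ω)
  have hmax : max (x - X ω) 0 = 0 := (mul_eq_zero.mp hzero).resolve_left (hp ω).ne'
  linarith [le_max_left (x - X ω) 0]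

end

theorem distortion_upper_bound_implies_below_general {Ω : Type*} [Fintype Ω]
    (p : Ω → ℝ) (hp : ∀ ω, 0 < p ω) (hsum : ∑ ω, p ω = 1)
    (X : Ω → ℝ) (Δp Δm lam : ℝ) (hΔp : 0 < Δp) (hΔm : 0 < Δm) (xs : ℝ)
    (hmin : ∀ y : ℝ,
        Δp * (∑ ω, p ω * max (X ω - xs) 0) + Δm * (∑ ω, p ω * max (xs - X ω) 0) + lam * xs
      ≤ Δp * (∑ ω, p ω * max (X ω - y) 0) + Δm * (∑ ω, p ω * max (y - X ω) 0) + lam * y)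
    (hlam : lam = Δp) :
    ∀ ω, xs ≤ X ω := by
  intro ω
  obtain ⟨ω₀, -, hω₀⟩ := exists_min_image univ X ⟨ω, mem_univ ω⟩
  have hbelow : ∀ ω, X ω₀ ≤ X ω := fun ω => hω₀ ω (mem_univ ω)
  have hcompare := hmin (X ω₀)
  rw [sum_mul_max_sub_eq_of_le hbelow, sum_mul_max_sub_eq_zero_of_le hbelow, hsum, hlam]
    at hcompare
  have hlower := sum_mul_sub_le_sum_mul_max_sub (fun ω => (hp ω).le) X xs
  rw [hsum] at hlower
  have hscaled : Δm * ∑ ω, p ω * max (xs - X ω) 0 ≤ 0 := by nlinarith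
  exact le_of_sum_mul_max_sub_nonpos hp (nonpos_of_mul_nonpos_right hscaled hΔm) ω

/-- If `x*` minimizes `f(x) = Δα⁺ E[(X-x)_+] + Δα⁻ E[(X-x)_-] + λ x` and
`λ = Δα⁺`, then `x* ≤ X(ω)` for every scenario. -/
theorem distortion_upper_bound_implies_below {Ω : Type*} [Fintype Ω] [Nonempty Ω]
    (p : Ω → ℝ) (hp : ∀ ω, 0 < p ω) (hsum : ∑ ω, p ω = 1)
    (X : Ω → ℝ) (Δp Δm lam : ℝ) (hΔp : 0 < Δp) (hΔm : 0 < Δm) (xs : ℝ)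
    (hmin : ∀ y : ℝ,
        Δp * (∑ ω, p ω * max (X ω - xs) 0) + Δm * (∑ ω, p ω * max (xs - X ω) 0) + lam * xs
      ≤ Δp * (∑ ω, p ω * max (X ω - y) 0) + Δm * (∑ ω, p ω * max (y - X ω) 0) + lam * y)
    (hlam : lam = Δp) :
    ∀ ω, xs ≤ X ω :=
  distortion_upper_bound_implies_below_general p hp hsum X Δp Δm lam hΔp hΔm xs hmin hlam
end

section
/- Let X be a real random variable on a finite probability space where every scenario has positive probability, and Δα⁺, Δα⁻ > 0. If x* minimizes f(x) = Δα⁺·E[(X-x)_+] + Δα⁻·E[(X-x)_-] + λ·x and λ = -Δα⁻, then x* ≥ X(ω) for all scenarios ω. -/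
/-!
Since `(y - X)₊ = (X - y)₊ + (y - X)`, when `λ = -Δα⁻` the objective collapses to
`(Δα⁺ + Δα⁻) E[(X - y)₊] - Δα⁻ E[X]`. Its minimum value is therefore attained exactly where
`E[(X - y)₊] = 0`, which, all scenarios having positive probability, means `y ≥ max X`.
-/

open Finset

lemma max_sub_zero_eq_max_sub_zero_add_sub {α : Type*} [AddCommGroup α] [LinearOrder α]
    [IsOrderedAddMonoid α] (a y : α) :
    max (y - a) 0 = max (a - y) 0 + (y - a) := by
  rcases le_total a y with h | h
  · rw [max_eq_left (sub_nonneg.2 h), max_eq_right (sub_nonpos.2 h), zero_add]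
  · rw [max_eq_right (sub_nonpos.2 h), max_eq_left (sub_nonneg.2 h), sub_add_sub_cancel, sub_self]

section Expectation

variable {Ω : Type*} [Fintype Ω] (p X : Ω → ℝ)

lemma sum_mul_max_sub_zero_eq_sum_mul_max_sub_zero_add (hsum : ∑ ω, p ω = 1) (y : ℝ) :
    ∑ ω, p ω * max (y - X ω) 0 = ∑ ω, p ω * max (X ω - y) 0 + y - ∑ ω, p ω * X ω := by
  simp only [max_sub_zero_eq_max_sub_zero_add_sub (X _) y, mul_add, mul_sub, sum_add_distrib,
    sum_sub_distrib, ← sum_mul, hsum, one_mul]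
  ring

lemma shortfall_objective_eq (hsum : ∑ ω, p ω = 1) (Δp Δm y : ℝ) :
    Δp * (∑ ω, p ω * max (X ω - y) 0) + Δm * (∑ ω, p ω * max (y - X ω) 0) + -Δm * y
      = (Δp + Δm) * (∑ ω, p ω * max (X ω - y) 0) - Δm * ∑ ω, p ω * X ω := by
  rw [sum_mul_max_sub_zero_eq_sum_mul_max_sub_zero_add p X hsum]
  ring

variable {p}

lemma sum_mul_max_sub_zero_nonneg (hp : ∀ ω, 0 ≤ p ω) (y : ℝ) :
    0 ≤ ∑ ω, p ω * max (X ω - y) 0 :=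
  sum_nonneg fun ω _ => mul_nonneg (hp ω) (le_max_right _ _)

lemma sum_mul_max_sub_zero_eq_zero_iff (hp : ∀ ω, 0 < p ω) (y : ℝ) :
    ∑ ω, p ω * max (X ω - y) 0 = 0 ↔ ∀ ω, X ω ≤ y := by
  rw [sum_eq_zero_iff_of_nonneg fun ω _ => mul_nonneg (hp ω).le (le_max_right _ _)]
  simp only [mem_univ, true_implies, mul_eq_zero, (hp _).ne', false_or, max_eq_right_iff,
    sub_nonpos]

end Expectation

theorem distortion_lower_bound_implies_above_general {Ω : Type*} [Fintype Ω]
    (p : Ω → ℝ) (hp : ∀ ω, 0 < p ω) (hsum : ∑ ω, p ω = 1)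
    (X : Ω → ℝ) (Δp Δm lam : ℝ) (hΔp : 0 < Δp) (hΔm : 0 < Δm) (xs : ℝ)
    (hmin : ∀ y : ℝ,
        Δp * (∑ ω, p ω * max (X ω - xs) 0) + Δm * (∑ ω, p ω * max (xs - X ω) 0) + lam * xs
      ≤ Δp * (∑ ω, p ω * max (X ω - y) 0) + Δm * (∑ ω, p ω * max (y - X ω) 0) + lam * y)
    (hlam : lam = -Δm) :
    ∀ ω, X ω ≤ xs := by
  subst hlam
  obtain ⟨M, hM⟩ : ∃ M, ∀ ω, X ω ≤ M := (Set.finite_range X).bddAbove.imp fun _ h ω => h ⟨ω, rfl⟩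
  have hmin_M := hmin M
  rw [shortfall_objective_eq p X hsum, shortfall_objective_eq p X hsum,
    (sum_mul_max_sub_zero_eq_zero_iff X hp M).2 hM, mul_zero, sub_le_sub_iff_right] at hmin_M
  have hzero : ∑ ω, p ω * max (X ω - xs) 0 = 0 :=
    le_antisymm (nonpos_of_mul_nonpos_right hmin_M (by positivity))
      (sum_mul_max_sub_zero_nonneg X (fun ω => (hp ω).le) xs)
  exact (sum_mul_max_sub_zero_eq_zero_iff X hp xs).1 hzero

/-- If `x*` minimizes `f(x) = Δα⁺ E[(X-x)_+] + Δα⁻ E[(X-x)_-] + λ x` and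
`λ = -Δα⁻`, then `x* ≥ X(ω)` for every scenario. -/
theorem distortion_lower_bound_implies_above {Ω : Type*} [Fintype Ω] [Nonempty Ω]
    (p : Ω → ℝ) (hp : ∀ ω, 0 < p ω) (hsum : ∑ ω, p ω = 1)
    (X : Ω → ℝ) (Δp Δm lam : ℝ) (hΔp : 0 < Δp) (hΔm : 0 < Δm) (xs : ℝ)
    (hmin : ∀ y : ℝ,
        Δp * (∑ ω, p ω * max (X ω - xs) 0) + Δm * (∑ ω, p ω * max (xs - X ω) 0) + lam * xs
      ≤ Δp * (∑ ω, p ω * max (X ω - y) 0) + Δm * (∑ ω, p ω * max (y - X ω) 0) + lam * y)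
    (hlam : lam = -Δm) :
    ∀ ω, X ω ≤ xs :=
  distortion_lower_bound_implies_above_general p hp hsum X Δp Δm lam hΔp hΔm xs hmin hlam
end
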